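/- arXiv:1207.1899 — 4 statements merged into one kernel-verified Lean document; each statement's English description precedes it below -/
import Mathlib

section
/- For binary states, the MTD model probabilities satisfy the linear relations p_{...i_r...i_s...1} + p_{...ĩ_r...ĩ_s...1} = p_{...i_r...ĩ_s...1} + p_{...ĩ_r...i_s...1}, where ĩ denotes swapping the binary state; i.e., for each fixed final state, the resulting l-dimensional 2×2×...×2 tensor lies in the linear space of tensors of the form u + x_{i_0} + y_{i_1} + ... + z_{i_{l-1}} (tropical rank 1). -/
/-!
For a fixed final state `c`, the MTD probability is `2⁻ˡ` times `∑ j, g j (i j)` with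
`g j x = lam j * q x c`, a sum of functions of one coordinate each. Changing coordinate `s` of
such a sum from `i s` to `b` shifts it by `g s b - g s (i s)`, whatever the other coordinates
are; comparing this shift with and without coordinate `r` flipped gives the exchange relation.
-/

open Function

section SeparableSum

variable {ι α M : Type*} [Fintype ι] [DecidableEq ι] [AddCommGroup M]

theorem Finset.sum_apply_update_sub_sum (g : ι → α → M) (x : ι → α) (r : ι) (a : α) :
    ∑ j, g j (update x r a j) - ∑ j, g j (x j) = g r a - g r (x r) := by
  simp_rw [apply_update (f := g), Finset.sum_update_of_mem (Finset.mem_univ r),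
    ← Finset.add_sum_erase _ _ (Finset.mem_univ r), Finset.sdiff_singleton_eq_erase]
  abel

theorem Finset.sum_apply_update_update_add (g : ι → α → M) (x : ι → α) {r s : ι}
    (hrs : r ≠ s) (a b : α) :
    ∑ j, g j (x j) + ∑ j, g j (update (update x r a) s b j) =
      ∑ j, g j (update x r a j) + ∑ j, g j (update x s b j) := by
  have h := Finset.sum_apply_update_sub_sum g (update x r a) s b
  rw [update_of_ne hrs.symm, ← Finset.sum_apply_update_sub_sum g x s b,
    sub_eq_sub_iff_add_eq_add] at h
  rw [add_comm, h, add_comm]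

end SeparableSum

theorem mtd_binary_exchange_relations_general (l : ℕ)
    (lam : Fin l → ℝ)
    (q : Fin 2 → Fin 2 → ℝ)
    (c : Fin 2) (r s : Fin l) (hrs : r ≠ s) (i : Fin l → Fin 2) :
    (fun i : Fin l → Fin 2 => (1 / 2 ^ l : ℝ) * ∑ j : Fin l, lam j * q (i j) c) i +
      (fun i : Fin l → Fin 2 => (1 / 2 ^ l : ℝ) * ∑ j : Fin l, lam j * q (i j) c)
        (Function.update (Function.update i r (1 - i r)) s (1 - i s)) =
    (fun i : Fin l → Fin 2 => (1 / 2 ^ l : ℝ) * ∑ j : Fin l, lam j * q (i j) c)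
        (Function.update i r (1 - i r)) +
      (fun i : Fin l → Fin 2 => (1 / 2 ^ l : ℝ) * ∑ j : Fin l, lam j * q (i j) c)
        (Function.update i s (1 - i s)) := by
  simp only [← mul_add]
  rw [Finset.sum_apply_update_update_add (fun j x => lam j * q x c) i hrs]

/-- For binary states, the MTD probabilities of sequences with a fixed
final state `c` satisfy the exchange relations
`p_{..i_r..i_s..c} + p_{..ĩ_r..ĩ_s..c} = p_{..i_r..ĩ_s..c} + p_{..ĩ_r..i_s..c}`,
where `ĩ = 1 - i` swaps the two binary states; i.e. the `2×⋯×2` tensor of these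
probabilities has tropical rank 1. -/
theorem mtd_binary_exchange_relations (l : ℕ) (hl : 0 < l)
    (lam : Fin l → ℝ) (hlam : ∀ j, 0 ≤ lam j) (hlamsum : ∑ j, lam j = 1)
    (q : Fin 2 → Fin 2 → ℝ) (hq : ∀ i j, 0 ≤ q i j) (hqrow : ∀ i, q i 0 + q i 1 = 1)
    (c : Fin 2) (r s : Fin l) (hrs : r ≠ s) (i : Fin l → Fin 2) :
    (fun i : Fin l → Fin 2 => (1 / 2 ^ l : ℝ) * ∑ j : Fin l, lam j * q (i j) c) i +
      (fun i : Fin l → Fin 2 => (1 / 2 ^ l : ℝ) * ∑ j : Fin l, lam j * q (i j) c)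
        (Function.update (Function.update i r (1 - i r)) s (1 - i s)) =
    (fun i : Fin l → Fin 2 => (1 / 2 ^ l : ℝ) * ∑ j : Fin l, lam j * q (i j) c)
        (Function.update i r (1 - i r)) +
      (fun i : Fin l → Fin 2 => (1 / 2 ^ l : ℝ) * ∑ j : Fin l, lam j * q (i j) c)
        (Function.update i s (1 - i s)) :=
  mtd_binary_exchange_relations_general l lam q c r s hrs i
end

section
/- A function p : {1,2}^l → ℝ satisfies all relations p(..i_r..i_s..) + p(..ĩ_r..ĩ_s..) = p(..i_r..ĩ_s..) + p(..ĩ_r..i_s..) for all pairs r < s if and only if there exist real numbers c and a_0, a_1, ..., a_{l-1} such that p(i_0,...,i_{l-1}) = c + sum_{j: i_j = 1} a_j. In particular, the set of such functions is a linear subspace of dimension l + 1 in ℝ^{2^l}. -/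
/-!
The exchange relations are linear in `p`, so their solutions form a submodule. It contains the
constants and every function of a single coordinate, hence every `c + ∑_{i_j = 1} a_j`.
Conversely, read on indicator words of finite sets, the relation at `(S, r, s)` says that the
increment `p(S ∪ {r}) - p(S)` does not change when `s` is added to `S`; by induction it equals
`p({r}) - p(∅)` for every `S`, and summing increments gives the affine form. The parametrisation
`(c, a) ↦ c + ∑_{i_j = 1} a_j` is injective (evaluate at `∅` and the singletons), so the
dimension is `l + 1`.
-/

open Finset Function

section

variable (ι R : Type*) [CommRing R]

def exchangeSubmodule [DecidableEq ι] : Submodule R ((ι → Fin 2) → R) where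
  carrier := {p | ∀ r s : ι, r ≠ s → ∀ i : ι → Fin 2,
    p i + p (update (update i r (1 - i r)) s (1 - i s)) =
      p (update i r (1 - i r)) + p (update i s (1 - i s))}
  add_mem' hp hq r s hrs i := by
    simp only [Pi.add_apply]
    linear_combination hp r s hrs i + hq r s hrs i
  zero_mem' _ _ _ _ := by simp
  smul_mem' c p hp r s hrs i := by
    simp only [Pi.smul_apply, smul_eq_mul]
    linear_combination c * hp r s hrs i

def affineForm [Fintype ι] : R × (ι → R) →ₗ[R] ((ι → Fin 2) → R) where
  toFun ca i := ca.1 + ∑ j, if i j = 1 then ca.2 j else 0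
  map_add' x y := by
    ext i
    simp only [Prod.fst_add, Prod.snd_add, Pi.add_apply, ite_add_zero, sum_add_distrib]
    ring
  map_smul' c x := by
    ext i
    simp [mul_sum, mul_add]

end

variable {ι R : Type*} [CommRing R]

theorem affineForm_apply [Fintype ι] (c : R) (a : ι → R) (i : ι → Fin 2) :
    affineForm ι R (c, a) i = c + ∑ j, if i j = 1 then a j else 0 := rfl

variable [DecidableEq ι]

theorem const_mem_exchangeSubmodule (c : R) :
    (fun _ : ι → Fin 2 => c) ∈ exchangeSubmodule ι R :=
  fun _ _ _ _ => rfl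

theorem comp_eval_mem_exchangeSubmodule (j : ι) (g : Fin 2 → R) :
    (fun i : ι → Fin 2 => g (i j)) ∈ exchangeSubmodule ι R := by
  intro r s hrs i
  by_cases hjs : j = s
  · subst hjs
    simp [update_of_ne hrs.symm]
  · by_cases hjr : j = r
    · subst hjr
      simp [update_of_ne hjs, add_comm]
    · simp [update_of_ne hjs, update_of_ne hjr]

theorem affineForm_mem_exchangeSubmodule [Fintype ι] (x : R × (ι → R)) :
    affineForm ι R x ∈ exchangeSubmodule ι R := by
  have h : affineForm ι R x =
      (fun _ => x.1) + ∑ j, fun i : ι → Fin 2 => if i j = 1 then x.2 j else 0 := by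
    ext i
    simp [affineForm, Finset.sum_apply]
  rw [h]
  exact add_mem (const_mem_exchangeSubmodule _) <|
    sum_mem fun j _ => comp_eval_mem_exchangeSubmodule j fun v => if v = 1 then x.2 j else 0

def indicatorWord (S : Finset ι) (j : ι) : Fin 2 := if j ∈ S then 1 else 0

theorem update_indicatorWord (S : Finset ι) (r : ι) :
    update (indicatorWord S) r 1 = indicatorWord (insert r S) := by
  ext j
  by_cases h : j = r <;> simp [indicatorWord, h]

theorem one_sub_indicatorWord_of_notMem {S : Finset ι} {r : ι} (h : r ∉ S) :
    1 - indicatorWord S r = 1 := by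
  simp [indicatorWord, h]

theorem indicatorWord_filter_eq_one [Fintype ι] (i : ι → Fin 2) :
    indicatorWord {j | i j = 1} = i := by
  ext j
  simp only [indicatorWord, mem_filter, mem_univ, true_and]
  split_ifs with h <;> omega

theorem affineForm_indicatorWord [Fintype ι] (c : R) (a : ι → R) (S : Finset ι) :
    affineForm ι R (c, a) (indicatorWord S) = c + ∑ j ∈ S, a j := by
  simp [affineForm_apply, indicatorWord, sum_ite_mem]

section

variable {p : (ι → Fin 2) → R} (hp : p ∈ exchangeSubmodule ι R)
include hp

theorem exchange_indicatorWord {S : Finset ι} {r s : ι} (hrs : r ≠ s) (hr : r ∉ S)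
    (hs : s ∉ S) :
    p (indicatorWord (insert s (insert r S))) + p (indicatorWord S) =
      p (indicatorWord (insert r S)) + p (indicatorWord (insert s S)) := by
  have h := hp r s hrs (indicatorWord S)
  rw [one_sub_indicatorWord_of_notMem hr, one_sub_indicatorWord_of_notMem hs,
    update_indicatorWord, update_indicatorWord, update_indicatorWord] at h
  linear_combination h

theorem increment_indicatorWord {S : Finset ι} {r : ι} (hr : r ∉ S) :
    p (indicatorWord (insert r S)) - p (indicatorWord S) =
      p (indicatorWord {r}) - p (indicatorWord ∅) := by
  induction S using Finset.induction_on with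
  | empty => rfl
  | insert s S hs ih =>
    have hrs : r ≠ s := fun h => hr (h ▸ mem_insert_self s S)
    have hrS : r ∉ S := fun h => hr (mem_insert_of_mem h)
    rw [← ih hrS]
    linear_combination exchange_indicatorWord hp hrs.symm hs (by simpa [hrs] using hr)

theorem eq_affineForm_indicatorWord [Fintype ι] (S : Finset ι) :
    p (indicatorWord S) = affineForm ι R (p (indicatorWord ∅),
      fun j => p (indicatorWord {j}) - p (indicatorWord ∅)) (indicatorWord S) := by
  rw [affineForm_indicatorWord]
  induction S using Finset.induction_on with
  | empty => simp
  | insert r S hr ih =>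
    rw [sum_insert hr]
    linear_combination increment_indicatorWord hp hr + ih

end

variable [Fintype ι]

theorem exchangeSubmodule_eq_range_affineForm :
    exchangeSubmodule ι R = LinearMap.range (affineForm ι R) := by
  refine le_antisymm (fun p hp => ?_) (LinearMap.range_le_iff_comap.mpr ?_)
  · refine ⟨(p (indicatorWord ∅), fun j => p (indicatorWord {j}) - p (indicatorWord ∅)),
      funext fun i => ?_⟩
    rw [← indicatorWord_filter_eq_one i]
    exact (eq_affineForm_indicatorWord hp _).symm
  · exact eq_top_iff.mpr fun x _ => affineForm_mem_exchangeSubmodule x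

theorem affineForm_injective : Injective (affineForm ι R) := by
  rintro ⟨c, a⟩ ⟨c', a'⟩ h
  have hc : c = c' := by
    simpa [affineForm_indicatorWord] using congrFun h (indicatorWord ∅)
  have ha : a = a' := funext fun j => by
    simpa [affineForm_indicatorWord, hc] using congrFun h (indicatorWord {j})
  rw [hc, ha]

theorem mem_exchangeSubmodule_iff {p : (ι → Fin 2) → R} :
    p ∈ exchangeSubmodule ι R ↔
      ∃ (c : R) (a : ι → R), ∀ i, p i = c + ∑ j, if i j = 1 then a j else 0 := by
  rw [exchangeSubmodule_eq_range_affineForm, LinearMap.mem_range, Prod.exists]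
  simp only [funext_iff, affineForm_apply, eq_comm]

theorem finrank_exchangeSubmodule [StrongRankCondition R] :
    Module.finrank R (exchangeSubmodule ι R) = Fintype.card ι + 1 := by
  rw [exchangeSubmodule_eq_range_affineForm, LinearMap.finrank_range_of_inj affineForm_injective,
    Module.finrank_prod, Module.finrank_self, Module.finrank_fintype_fun_eq_card, add_comm]

theorem tropical_rank_one_characterization_general (l : ℕ) :
    (∀ p : (Fin l → Fin 2) → ℝ,
      (∀ r s : Fin l, r ≠ s → ∀ i : Fin l → Fin 2,
          p i + p (Function.update (Function.update i r (1 - i r)) s (1 - i s)) =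
            p (Function.update i r (1 - i r)) + p (Function.update i s (1 - i s))) ↔
        ∃ (c : ℝ) (a : Fin l → ℝ),
          ∀ i : Fin l → Fin 2, p i = c + ∑ j : Fin l, if i j = 1 then a j else 0) ∧
    ∃ V : Submodule ℝ ((Fin l → Fin 2) → ℝ),
      (V : Set ((Fin l → Fin 2) → ℝ)) =
        {p | ∀ r s : Fin l, r ≠ s → ∀ i : Fin l → Fin 2,
          p i + p (Function.update (Function.update i r (1 - i r)) s (1 - i s)) =
            p (Function.update i r (1 - i r)) + p (Function.update i s (1 - i s))} ∧
      Module.finrank ℝ V = l + 1 :=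
  ⟨fun _ => mem_exchangeSubmodule_iff, exchangeSubmodule (Fin l) ℝ, rfl,
    by rw [finrank_exchangeSubmodule, Fintype.card_fin]⟩

/-- A function `p : {1,2}^l → ℝ` satisfies all exchange relations
`p(..i_r..i_s..) + p(..ĩ_r..ĩ_s..) = p(..i_r..ĩ_s..) + p(..ĩ_r..i_s..)` (r ≠ s)
iff it has the form `p(i) = c + ∑_{j : i_j = 1} a_j`; moreover the set of such
functions is a linear subspace of dimension `l + 1` of `ℝ^{2^l}`.
(Binary state 1 is encoded as `(1 : Fin 2)` and `ĩ = 1 - i`.) -/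
theorem tropical_rank_one_characterization (l : ℕ) (hl : 0 < l) :
    (∀ p : (Fin l → Fin 2) → ℝ,
      (∀ r s : Fin l, r ≠ s → ∀ i : Fin l → Fin 2,
          p i + p (Function.update (Function.update i r (1 - i r)) s (1 - i s)) =
            p (Function.update i r (1 - i r)) + p (Function.update i s (1 - i s))) ↔
        ∃ (c : ℝ) (a : Fin l → ℝ),
          ∀ i : Fin l → Fin 2, p i = c + ∑ j : Fin l, if i j = 1 then a j else 0) ∧
    ∃ V : Submodule ℝ ((Fin l → Fin 2) → ℝ),
      (V : Set ((Fin l → Fin 2) → ℝ)) =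
        {p | ∀ r s : Fin l, r ≠ s → ∀ i : Fin l → Fin 2,
          p i + p (Function.update (Function.update i r (1 - i r)) s (1 - i s)) =
            p (Function.update i r (1 - i r)) + p (Function.update i s (1 - i s))} ∧
      Module.finrank ℝ V = l + 1 :=
  tropical_rank_one_characterization_general l
end

section
/- The MTD parametrization map annihilates the linear forms p_{i_0 i_1 ... i_{l-1} i_l} − sum_{j=0}^{l-1} p_{m...m i_j m...m i_l} + (l−1) p_{m m ... m i_l}: i.e., substituting the MTD parametrization into this expression yields 0 for every sequence (i_0,...,i_l) ∈ {1,...,m}^{l+1}. -/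
/-! Up to the factor `1 / (m + 1) ^ l`, the MTD value is a sum of terms `lam j * q i_j i_l`, one per
initial position. Changing the all-`m` sequence in position `j` alone thus adds the increment of the
`j`-th term only, and summing over `j` gives `p_i` plus `l - 1` extra copies of `p_{m...m i_l}`. -/

open Finset Function

theorem Fintype.sum_update_eq_sub_add {ι R : Type*} [Fintype ι] [DecidableEq ι] [AddCommGroup R]
    (f : ι → R) (j : ι) (b : R) :
    ∑ k, update f j b k = b - f j + ∑ k, f k := by
  rw [sum_update_of_mem (mem_univ j), sum_eq_add_sum_sdiff_singleton_of_mem (mem_univ j) f]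
  abel

theorem sum_sum_apply_update_const {ι α R : Type*} [Fintype ι] [DecidableEq ι] [CommRing R]
    (g : ι → α → R) (d : α) (a : ι → α) :
    ∑ j, ∑ k, g k (update (fun _ => d) j (a j) k) =
      ∑ k, g k (a k) + ((Fintype.card ι : R) - 1) * ∑ k, g k d := by
  simp only [apply_update g, Fintype.sum_update_eq_sub_add, sum_add_distrib, sum_sub_distrib,
    sum_const, card_univ, nsmul_eq_mul]
  ring

theorem mtd_linear_forms_vanish_general (l m : ℕ)
    (lam : Fin l → ℝ) (q : Fin (m + 1) → Fin (m + 1) → ℝ)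
    (p : (Fin (l + 1) → Fin (m + 1)) → ℝ)
    (hp : ∀ i, p i = (1 / (m + 1 : ℝ) ^ l) *
        ∑ j : Fin l, lam j * q (i j.castSucc) (i (Fin.last l)))
    (i : Fin (l + 1) → Fin (m + 1)) :
    p i -
        (∑ j : Fin l,
          p fun t : Fin (l + 1) =>
            if t = Fin.last l then i (Fin.last l)
            else if t = j.castSucc then i j.castSucc else Fin.last m) +
      ((l : ℝ) - 1) *
        p (fun t : Fin (l + 1) =>
            if t = Fin.last l then i (Fin.last l) else Fin.last m) = 0 := by
  have hne : ∀ k : Fin l, k.castSucc ≠ Fin.last l := fun k => (Fin.castSucc_lt_last k).ne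
  have hupdate : ∀ j k : Fin l, (if k.castSucc = j.castSucc then i j.castSucc else Fin.last m) =
      update (fun _ => Fin.last m) j (i j.castSucc) k := by
    intro j k
    simp only [Fin.castSucc_inj, update_apply]
  simp only [hp, ↓reduceIte, if_neg (hne _), hupdate]
  have key := sum_sum_apply_update_const (fun k y => lam k * q y (i (Fin.last l))) (Fin.last m)
    (fun k => i k.castSucc)
  simp only [Fintype.card_fin] at key
  rw [← mul_sum, key]
  ring

/-- The MTD parametrization (with `m + 1` states; the paper's
state "m" is `Fin.last m`) annihilates the linear forms
`p_{i_0 ... i_{l-1} i_l} − ∑_{j=0}^{l-1} p_{m...m i_j m...m i_l}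
 + (l−1)·p_{m...m i_l}`
for every sequence `i ∈ {1,...,m+1}^{l+1}`, where in the middle sum the state
`i_j` sits at position `j` and all other initial positions hold state "m". -/
theorem mtd_linear_forms_vanish (l m : ℕ) (hl : 0 < l)
    (lam : Fin l → ℝ) (q : Fin (m + 1) → Fin (m + 1) → ℝ)
    (p : (Fin (l + 1) → Fin (m + 1)) → ℝ)
    (hp : ∀ i, p i = (1 / (m + 1 : ℝ) ^ l) *
        ∑ j : Fin l, lam j * q (i j.castSucc) (i (Fin.last l)))
    (i : Fin (l + 1) → Fin (m + 1)) :
    p i -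
        (∑ j : Fin l,
          p fun t : Fin (l + 1) =>
            if t = Fin.last l then i (Fin.last l)
            else if t = j.castSucc then i j.castSucc else Fin.last m) +
      ((l : ℝ) - 1) *
        p (fun t : Fin (l + 1) =>
            if t = Fin.last l then i (Fin.last l) else Fin.last m) = 0 :=
  mtd_linear_forms_vanish_general l m lam q p hp i
end

section
/- The MTD model with binary states is identifiable away from equal-row transition matrices: if two parameter tuples (a,b,λ) and (a',b',λ') with a ≠ b and a' ≠ b' (where a = q_{11}, b = q_{21}, λ the mixing distribution) induce the same probability distribution p via the binary MTD parametrization, then a = a', b = b', and λ = λ'. -/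
/-!
Feed the model the histories that end in state `1` (encoded `0 : Fin 2`) and have
state `1` exactly at the past positions of a set `s`. Since `λ` sums to one, such a
history has probability `(b + (a - b) ∑_{j ∈ s} λ_j) / 2^l`. Taking `s` to be all
positions gives `a`, the empty set gives `b`, and a singleton `{j}` then gives `λ_j`
because `a ≠ b`.
-/

open Finset

def binaryTransition (a b : ℝ) (x y : Fin 2) : ℝ :=
  if x = 0 then (if y = 0 then a else 1 - a) else (if y = 0 then b else 1 - b)

/-- The paper's `p_{i_0 … i_l}`, with `i_{j-1} = i (j.castSucc)` for `j : Fin l` 0-indexed. -/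
noncomputable def mtdProb {l : ℕ} (lam : Fin l → ℝ) (a b : ℝ) (i : Fin (l + 1) → Fin 2) : ℝ :=
  (1 / 2 ^ l) * ∑ j, lam j * binaryTransition a b (i j.castSucc) (i (Fin.last l))

def pastIndicator {l : ℕ} (s : Finset (Fin l)) : Fin (l + 1) → Fin 2 :=
  Fin.lastCases 0 fun j => if j ∈ s then 0 else 1

theorem mtdProb_pastIndicator {l : ℕ} {lam : Fin l → ℝ} (hlam : ∑ j, lam j = 1) (a b : ℝ)
    (s : Finset (Fin l)) :
    mtdProb lam a b (pastIndicator s) = (b + (a - b) * ∑ j ∈ s, lam j) / 2 ^ l := by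
  have hsummand : ∀ j, lam j * binaryTransition a b (pastIndicator s j.castSucc)
      (pastIndicator s (Fin.last l)) = lam j * b + if j ∈ s then lam j * (a - b) else 0 := by
    intro j
    by_cases hj : j ∈ s <;> simp [pastIndicator, binaryTransition, hj]
    ring
  rw [mtdProb, sum_congr rfl fun j _ => hsummand j, sum_add_distrib, ← sum_mul, hlam,
    sum_ite_mem, univ_inter, ← sum_mul]
  ring

theorem mtd_binary_identifiable_general (l : ℕ)
    (a b a' b' : ℝ) (hab : a ≠ b)
    (lam lam' : Fin l → ℝ)
    (hlamsum : ∑ j, lam j = 1)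
    (hlamsum' : ∑ j, lam' j = 1)
    (heq : ∀ i : Fin (l + 1) → Fin 2,
      (1 / 2 ^ l : ℝ) *
          ∑ j : Fin l, lam j *
            (if i j.castSucc = 0 then (if i (Fin.last l) = 0 then a else 1 - a)
             else (if i (Fin.last l) = 0 then b else 1 - b)) =
        (1 / 2 ^ l : ℝ) *
          ∑ j : Fin l, lam' j *
            (if i j.castSucc = 0 then (if i (Fin.last l) = 0 then a' else 1 - a')
             else (if i (Fin.last l) = 0 then b' else 1 - b'))) :
    a = a' ∧ b = b' ∧ lam = lam' := by
  have hp (s : Finset (Fin l)) :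
      b + (a - b) * ∑ j ∈ s, lam j = b' + (a' - b') * ∑ j ∈ s, lam' j := by
    have h : mtdProb lam a b (pastIndicator s) = mtdProb lam' a' b' (pastIndicator s) :=
      heq (pastIndicator s)
    rwa [mtdProb_pastIndicator hlamsum, mtdProb_pastIndicator hlamsum',
      div_left_inj' (by positivity)] at h
  have ha : a = a' := by simpa [hlamsum, hlamsum'] using hp univ
  have hb : b = b' := by simpa using hp ∅
  refine ⟨ha, hb, funext fun j => ?_⟩
  have hj := hp {j}
  rw [sum_singleton, sum_singleton, ← ha, ← hb, add_right_inj, mul_comm, mul_comm _ (lam' j)] at hj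
  exact mul_right_cancel₀ (sub_ne_zero.mpr hab) hj

/-- The binary MTD model is identifiable away from equal-row
transition matrices: if `(a,b,λ)` and `(a',b',λ')` with `a ≠ b`, `a' ≠ b'`
induce the same distribution `p_{i_0...i_l} = (1/2^l) ∑_j λ_j q_{i_{j-1},i_l}`
(where `q` has rows `(a, 1−a)` and `(b, 1−b)`, state 1 encoded as `0 : Fin 2`),
then `a = a'`, `b = b'` and `λ = λ'`. -/
theorem mtd_binary_identifiable (l : ℕ) (hl : 2 ≤ l)
    (a b a' b' : ℝ) (hab : a ≠ b) (hab' : a' ≠ b')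
    (lam lam' : Fin l → ℝ)
    (hlam : ∀ j, 0 ≤ lam j) (hlamsum : ∑ j, lam j = 1)
    (hlam' : ∀ j, 0 ≤ lam' j) (hlamsum' : ∑ j, lam' j = 1)
    (heq : ∀ i : Fin (l + 1) → Fin 2,
      (1 / 2 ^ l : ℝ) *
          ∑ j : Fin l, lam j *
            (if i j.castSucc = 0 then (if i (Fin.last l) = 0 then a else 1 - a)
             else (if i (Fin.last l) = 0 then b else 1 - b)) =
        (1 / 2 ^ l : ℝ) *
          ∑ j : Fin l, lam' j *
            (if i j.castSucc = 0 then (if i (Fin.last l) = 0 then a' else 1 - a')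
             else (if i (Fin.last l) = 0 then b' else 1 - b'))) :
    a = a' ∧ b = b' ∧ lam = lam' :=
  mtd_binary_identifiable_general l a b a' b' hab lam lam' hlamsum hlamsum' heq
end
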